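/- Let (γ, ν₁, ν₂) and (γ̃, ν̃₁, ν̃₂) be non-parabolic spatial hybrid framed curves on an interval I with the same curvature (l, m, n, α) and the same signs δ₁, δ₂. Then they are congruent through a spatial hybrid motion: there exist A with AᵀGA = G, det A = 1, and H₀ ∈ H^p, such that γ̃ = Aγ + H₀, ν̃₁ = Aν₁, ν̃₂ = Aν₂ on I. -/

import Mathlib

open Real Matrix

noncomputable section

/-- Scalar product on the spatial hybrid number space, coordinates (b,c,d). -/
def g (x y : Fin 3 → ℝ) : ℝ := x 0 * y 0 - x 0 * y 1 - y 0 * x 1 - x 2 * y 2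

/-- Hybridian product of g-orthogonal spatial hybrid numbers. -/
def hprod (x y : Fin 3 → ℝ) : Fin 3 → ℝ :=
  ![x 0 * y 2 - y 0 * x 2, x 0 * y 2 - y 0 * x 2 - x 1 * y 2 + y 1 * x 2,
    y 0 * x 1 - x 0 * y 1]

/-- Gram matrix of g. -/
def Gmat : Matrix (Fin 3) (Fin 3) ℝ := !![1, -1, 0; -1, 0, 0; 0, 0, -1]

/-!
Let `P t`, `Q t` be the matrices whose rows are the frames `(ν₁, ν₂, μ)` and `(ν̃₁, ν̃₂, μ̃)`, and
`D = diag(δ₁, δ₂, δ₁δ₂)` their common Gram matrix, so that `P G Pᵀ = Q G Qᵀ = D`. Both frames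
satisfy the same linear system `P' = K P`, `Q' = K Q`, and `D K` is skew-symmetric, so `Qᵀ D P` is
constant on `I`. This replaces the uniqueness theorem for ODEs, which would need regularity of the
curvatures. Hence `A = Qᵀ D P G` is a single matrix with `A Pᵀ = Qᵀ` at every time: it sends one
frame to the other, preserves `g`, has determinant `(δ₁δ₂)⁴ = 1` because `det P = det Q = δ₁δ₂`,
and `γ̃ - A γ` has derivative `α (μ̃ - A μ) = 0`.
-/

theorem Convex.eq_of_forall_hasDerivAt_zero {E : Type*} [NormedAddCommGroup E] [NormedSpace ℝ E]
    {I : Set ℝ} (hI : Convex ℝ I) {f : ℝ → E} (hf : ∀ t ∈ I, HasDerivAt f 0 t)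
    {a b : ℝ} (ha : a ∈ I) (hb : b ∈ I) : f a = f b := by
  have h := hI.norm_image_sub_le_of_norm_hasDerivWithin_le (C := 0)
    (fun t ht => (hf t ht).hasDerivWithinAt) (fun _ _ => norm_zero.le) hb ha
  rwa [zero_mul, norm_le_zero_iff, sub_eq_zero] at h

theorem HasDerivAt.const_mulVec {ι : Type*} [Fintype ι] (A : Matrix ι ι ℝ) {f : ℝ → ι → ℝ}
    {f' : ι → ℝ} {t : ℝ} (hf : HasDerivAt f f' t) :
    HasDerivAt (fun s => A *ᵥ f s) (A *ᵥ f') t :=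
  (Matrix.mulVecLin A).toContinuousLinearMap.hasFDerivAt.comp_hasDerivAt t hf

section Conservation

variable {ι : Type*} [Fintype ι] {D K : Matrix ι ι ℝ} {t : ℝ}

theorem hasDerivAt_dotProduct_mulVec_eq_zero (hK : Kᵀ * D + D * K = 0) {a b : ℝ → ι → ℝ}
    (ha : HasDerivAt a (K *ᵥ a t) t) (hb : HasDerivAt b (K *ᵥ b t) t) :
    HasDerivAt (fun s => a s ⬝ᵥ (D *ᵥ b s)) 0 t := by
  have hsum := HasDerivAt.fun_sum (u := Finset.univ) fun i _ =>
    (hasDerivAt_pi.mp ha i).mul (hasDerivAt_pi.mp (hb.const_mulVec D) i)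
  refine hsum.congr_deriv ?_
  calc ∑ i, ((K *ᵥ a t) i * (D *ᵥ b t) i + a t i * (D *ᵥ (K *ᵥ b t)) i)
      = (K *ᵥ a t) ⬝ᵥ (D *ᵥ b t) + a t ⬝ᵥ (D *ᵥ (K *ᵥ b t)) := Finset.sum_add_distrib
    _ = a t ⬝ᵥ ((Kᵀ * D + D * K) *ᵥ b t) := by
        rw [add_mulVec, dotProduct_add, ← mulVec_mulVec, ← mulVec_mulVec,
          dotProduct_mulVec (a t) Kᵀ, vecMul_transpose]
    _ = 0 := by rw [hK, zero_mulVec, dotProduct_zero]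

theorem hasDerivAt_transpose_mul_mul_eq_zero (hK : Kᵀ * D + D * K = 0)
    {P Q : ℝ → Matrix ι ι ℝ} (hP : ∀ k, HasDerivAt (fun s => P s k) ((K * P t) k) t)
    (hQ : ∀ k, HasDerivAt (fun s => Q s k) ((K * Q t) k) t) (i j : ι) :
    HasDerivAt (fun s => ((Q s)ᵀ * D * P s) i j) 0 t := by
  have hcol : ∀ R : ℝ → Matrix ι ι ℝ, (∀ k, HasDerivAt (fun s => R s k) ((K * R t) k) t) →
      ∀ j, HasDerivAt (fun s => (R s)ᵀ j) (K *ᵥ (R t)ᵀ j) t := fun R hR j =>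
    hasDerivAt_pi.mpr fun k => hasDerivAt_pi.mp (hR k) j
  simp only [Matrix.mul_assoc]
  exact hasDerivAt_dotProduct_mulVec_eq_zero hK (hcol Q hQ i) (hcol P hP j)

end Conservation

theorem mulVec_eq_of_mul_transpose_eq {ι : Type*} [Fintype ι] {A P Q : Matrix ι ι ℝ}
    (h : A * Pᵀ = Qᵀ) (k : ι) : A *ᵥ P k = Q k :=
  funext fun i => congrFun (congrFun h i) k

section FrameTransition

variable {ι : Type*} [Fintype ι] [DecidableEq ι] {G D P Q : Matrix ι ι ℝ}

def frameTransition (G D P Q : Matrix ι ι ℝ) : Matrix ι ι ℝ := Qᵀ * D * P * G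

theorem frameTransition_mul_transpose (hD : D * D = 1) (hP : P * G * Pᵀ = D) :
    frameTransition G D P Q * Pᵀ = Qᵀ :=
  calc Qᵀ * D * P * G * Pᵀ = Qᵀ * D * (P * G * Pᵀ) := by simp only [Matrix.mul_assoc]
    _ = Qᵀ := by rw [hP, Matrix.mul_assoc, hD, Matrix.mul_one]

theorem frameTransition_transpose_mul_mul (hG : Gᵀ = G) (hDt : Dᵀ = D) (hD : D * D = 1)
    (hP : P * G * Pᵀ = D) (hQ : Q * G * Qᵀ = D) :
    (frameTransition G D P Q)ᵀ * G * frameTransition G D P Q = G := by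
  have hPinv : G * Pᵀ * D * P = 1 := by
    rw [mul_eq_one_comm, ← Matrix.mul_assoc, ← Matrix.mul_assoc, hP, hD]
  calc (Qᵀ * D * P * G)ᵀ * G * (Qᵀ * D * P * G)
      = G * Pᵀ * D * (Q * G * Qᵀ) * D * P * G := by
        simp only [Matrix.transpose_mul, Matrix.transpose_transpose, hG, hDt, Matrix.mul_assoc]
    _ = G * Pᵀ * D * P * G := by
        rw [hQ, Matrix.mul_assoc (G * Pᵀ * D) D D, hD, Matrix.mul_one]
    _ = G := by rw [hPinv, Matrix.one_mul]

end FrameTransition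

theorem g_comm (x y : Fin 3 → ℝ) : g x y = g y x := by simp only [g]; ring

theorem g_hprod_left (x y : Fin 3 → ℝ) : g x (hprod x y) = 0 := by simp [g, hprod]; ring

theorem g_hprod_right (x y : Fin 3 → ℝ) : g y (hprod x y) = 0 := by simp [g, hprod]; ring

theorem g_hprod_hprod (x y : Fin 3 → ℝ) :
    g (hprod x y) (hprod x y) = g x x * g y y - g x y ^ 2 := by simp [g, hprod]; ring

theorem hprod_self (x : Fin 3 → ℝ) : hprod x x = 0 := by ext i; fin_cases i <;> simp [hprod]

theorem hprod_add_left (x y z : Fin 3 → ℝ) : hprod (x + y) z = hprod x z + hprod y z := by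
  ext i; fin_cases i <;> simp [hprod] <;> ring

theorem hprod_add_right (x y z : Fin 3 → ℝ) : hprod x (y + z) = hprod x y + hprod x z := by
  ext i; fin_cases i <;> simp [hprod] <;> ring

theorem hprod_smul_left (c : ℝ) (x y : Fin 3 → ℝ) : hprod (c • x) y = c • hprod x y := by
  ext i; fin_cases i <;> simp [hprod] <;> ring

theorem hprod_smul_right (c : ℝ) (x y : Fin 3 → ℝ) : hprod x (c • y) = c • hprod x y := by
  ext i; fin_cases i <;> simp [hprod] <;> ring

theorem hprod_hprod_left (x y : Fin 3 → ℝ) : hprod (hprod x y) y = g x y • y - g y y • x := by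
  ext i; fin_cases i <;> simp [hprod, g] <;> ring

theorem hprod_hprod_right (x y : Fin 3 → ℝ) : hprod x (hprod x y) = g x y • x - g x x • y := by
  ext i; fin_cases i <;> simp [hprod, g] <;> ring

theorem HasDerivAt.hprod {x y : ℝ → Fin 3 → ℝ} {x' y' : Fin 3 → ℝ} {t : ℝ}
    (hx : HasDerivAt x x' t) (hy : HasDerivAt y y' t) :
    HasDerivAt (fun s => hprod (x s) (y s)) (hprod x' (y t) + hprod (x t) y') t := by
  have hx := hasDerivAt_pi.mp hx
  have hy := hasDerivAt_pi.mp hy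
  refine hasDerivAt_pi.mpr fun i => ?_
  fin_cases i
  · exact (((hx 0).mul (hy 2)).sub ((hy 0).mul (hx 2))).congr_deriv
      (by simp [_root_.hprod]; ring)
  · exact (((((hx 0).mul (hy 2)).sub ((hy 0).mul (hx 2))).sub ((hx 1).mul (hy 2))).add
      ((hy 1).mul (hx 2))).congr_deriv (by simp [_root_.hprod]; ring)
  · exact (((hy 0).mul (hx 1)).sub ((hx 0).mul (hy 1))).congr_deriv
      (by simp [_root_.hprod]; ring)

def hybridFrame (x y : Fin 3 → ℝ) : Matrix (Fin 3) (Fin 3) ℝ := Matrix.of ![x, y, hprod x y]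

@[simp] theorem hybridFrame_zero (x y : Fin 3 → ℝ) : hybridFrame x y 0 = x := rfl

@[simp] theorem hybridFrame_one (x y : Fin 3 → ℝ) : hybridFrame x y 1 = y := rfl

@[simp] theorem hybridFrame_two (x y : Fin 3 → ℝ) : hybridFrame x y 2 = hprod x y := rfl

def signMatrix (δ₁ δ₂ : ℝ) : Matrix (Fin 3) (Fin 3) ℝ := Matrix.diagonal ![δ₁, δ₂, δ₁ * δ₂]

def frenetMatrix (δ₁ δ₂ l m n : ℝ) : Matrix (Fin 3) (Fin 3) ℝ :=
  !![0, l, m; -(δ₁ * δ₂) * l, 0, n; -(δ₂ * m), -(δ₁ * n), 0]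

theorem Gmat_transpose : Gmatᵀ = Gmat := by
  ext i j; fin_cases i <;> fin_cases j <;> rfl

theorem det_Gmat : Gmat.det = 1 := by simp [Gmat, Matrix.det_fin_three]

theorem mul_Gmat_mul_transpose_apply (P : Matrix (Fin 3) (Fin 3) ℝ) (i j : Fin 3) :
    (P * Gmat * Pᵀ) i j = g (P i) (P j) := by
  simp [Matrix.mul_apply, Fin.sum_univ_three, Gmat, g]; ring

theorem signMatrix_transpose (δ₁ δ₂ : ℝ) : (signMatrix δ₁ δ₂)ᵀ = signMatrix δ₁ δ₂ :=
  Matrix.diagonal_transpose _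

theorem signMatrix_mul_self {δ₁ δ₂ : ℝ} (h₁ : δ₁ ^ 2 = 1) (h₂ : δ₂ ^ 2 = 1) :
    signMatrix δ₁ δ₂ * signMatrix δ₁ δ₂ = 1 := by
  rw [signMatrix, Matrix.diagonal_mul_diagonal, ← Matrix.diagonal_one]
  congr 1
  ext i; fin_cases i <;> simp <;> nlinarith

theorem det_signMatrix (δ₁ δ₂ : ℝ) : (signMatrix δ₁ δ₂).det = (δ₁ * δ₂) ^ 2 := by
  simp [signMatrix, Fin.prod_univ_three]; ring

theorem frenetMatrix_transpose_mul_add_mul_eq_zero {δ₁ δ₂ : ℝ} (h₁ : δ₁ ^ 2 = 1)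
    (h₂ : δ₂ ^ 2 = 1) (l m n : ℝ) :
    (frenetMatrix δ₁ δ₂ l m n)ᵀ * signMatrix δ₁ δ₂ + signMatrix δ₁ δ₂ * frenetMatrix δ₁ δ₂ l m n
      = 0 := by
  ext i j
  fin_cases i <;> fin_cases j <;>
    simp [frenetMatrix, signMatrix, Matrix.mul_apply, Fin.sum_univ_three] <;> ring_nf <;>
    simp [h₁, h₂]

section HybridFrame

variable {x y : Fin 3 → ℝ} {δ₁ δ₂ : ℝ}

theorem det_hybridFrame (h₁ : g x x = δ₁) (h₂ : g y y = δ₂) (h₀ : g x y = 0) :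
    (hybridFrame x y).det = δ₁ * δ₂ := by
  have h : (hybridFrame x y).det = g (hprod x y) (hprod x y) := by
    simp [hybridFrame, Matrix.det_fin_three, hprod, g]; ring
  rw [h, g_hprod_hprod, h₁, h₂, h₀]; ring

theorem hybridFrame_mul_Gmat_mul_transpose (h₁ : g x x = δ₁) (h₂ : g y y = δ₂) (h₀ : g x y = 0) :
    hybridFrame x y * Gmat * (hybridFrame x y)ᵀ = signMatrix δ₁ δ₂ := by
  ext i j
  rw [mul_Gmat_mul_transpose_apply]
  fin_cases i <;> fin_cases j <;>
    simp [signMatrix, g_comm y x, g_comm (hprod x y), g_hprod_left, g_hprod_right,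
      g_hprod_hprod, h₁, h₂, h₀]

end HybridFrame

section FrenetSystem

variable {x y : ℝ → Fin 3 → ℝ} {δ₁ δ₂ l m n t : ℝ}

theorem hasDerivAt_hprod_of_frenet
    (hx : HasDerivAt x (l • y t + m • hprod (x t) (y t)) t)
    (hy : HasDerivAt y ((-(δ₁ * δ₂) * l) • x t + n • hprod (x t) (y t)) t)
    (h₁ : g (x t) (x t) = δ₁) (h₂ : g (y t) (y t) = δ₂) (h₀ : g (x t) (y t) = 0) :
    HasDerivAt (fun s => hprod (x s) (y s)) ((-(δ₂ * m)) • x t + (-(δ₁ * n)) • y t) t := by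
  refine (hx.hprod hy).congr_deriv ?_
  simp only [hprod_add_left, hprod_add_right, hprod_smul_left, hprod_smul_right, hprod_self,
    hprod_hprod_left, hprod_hprod_right, h₁, h₂, h₀]
  module

theorem hasDerivAt_hybridFrame
    (hx : HasDerivAt x (l • y t + m • hprod (x t) (y t)) t)
    (hy : HasDerivAt y ((-(δ₁ * δ₂) * l) • x t + n • hprod (x t) (y t)) t)
    (h₁ : g (x t) (x t) = δ₁) (h₂ : g (y t) (y t) = δ₂) (h₀ : g (x t) (y t) = 0) (k : Fin 3) :
    HasDerivAt (fun s => hybridFrame (x s) (y s) k)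
      ((frenetMatrix δ₁ δ₂ l m n * hybridFrame (x t) (y t)) k) t := by
  match k with
  | 0 => exact hx.congr_deriv (by ext c; simp [frenetMatrix, Matrix.mul_apply, Fin.sum_univ_three])
  | 1 => exact hy.congr_deriv (by ext c; simp [frenetMatrix, Matrix.mul_apply, Fin.sum_univ_three])
  | 2 =>
    exact (hasDerivAt_hprod_of_frenet hx hy h₁ h₂ h₀).congr_deriv
      (by ext c; simp [frenetMatrix, Matrix.mul_apply, Fin.sum_univ_three])

end FrenetSystem

structure IsHybridFrenetFrame (I : Set ℝ) (δ₁ δ₂ : ℝ) (l m n : ℝ → ℝ) (ν₁ ν₂ : ℝ → Fin 3 → ℝ) :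
    Prop where
  g_self_left : ∀ t ∈ I, g (ν₁ t) (ν₁ t) = δ₁
  g_self_right : ∀ t ∈ I, g (ν₂ t) (ν₂ t) = δ₂
  g_eq_zero : ∀ t ∈ I, g (ν₁ t) (ν₂ t) = 0
  hasDerivAt_left : ∀ t ∈ I, HasDerivAt ν₁ (l t • ν₂ t + m t • hprod (ν₁ t) (ν₂ t)) t
  hasDerivAt_right :
    ∀ t ∈ I, HasDerivAt ν₂ ((-(δ₁ * δ₂) * l t) • ν₁ t + n t • hprod (ν₁ t) (ν₂ t)) t

namespace IsHybridFrenetFrame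

variable {I : Set ℝ} {δ₁ δ₂ : ℝ} {l m n : ℝ → ℝ} {ν₁ ν₂ ν₁' ν₂' : ℝ → Fin 3 → ℝ} {t : ℝ}

theorem hasDerivAt_frame (h : IsHybridFrenetFrame I δ₁ δ₂ l m n ν₁ ν₂) (ht : t ∈ I) (k : Fin 3) :
    HasDerivAt (fun s => hybridFrame (ν₁ s) (ν₂ s) k)
      ((frenetMatrix δ₁ δ₂ (l t) (m t) (n t) * hybridFrame (ν₁ t) (ν₂ t)) k) t :=
  hasDerivAt_hybridFrame (h.hasDerivAt_left t ht) (h.hasDerivAt_right t ht) (h.g_self_left t ht)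
    (h.g_self_right t ht) (h.g_eq_zero t ht) k

theorem frame_mul_Gmat_mul_transpose (h : IsHybridFrenetFrame I δ₁ δ₂ l m n ν₁ ν₂) (ht : t ∈ I) :
    hybridFrame (ν₁ t) (ν₂ t) * Gmat * (hybridFrame (ν₁ t) (ν₂ t))ᵀ = signMatrix δ₁ δ₂ :=
  hybridFrame_mul_Gmat_mul_transpose (h.g_self_left t ht) (h.g_self_right t ht) (h.g_eq_zero t ht)

theorem det_frame (h : IsHybridFrenetFrame I δ₁ δ₂ l m n ν₁ ν₂) (ht : t ∈ I) :
    (hybridFrame (ν₁ t) (ν₂ t)).det = δ₁ * δ₂ :=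
  det_hybridFrame (h.g_self_left t ht) (h.g_self_right t ht) (h.g_eq_zero t ht)

theorem transpose_mul_mul_eq (hI : Convex ℝ I) (hδ₁ : δ₁ ^ 2 = 1) (hδ₂ : δ₂ ^ 2 = 1)
    (h : IsHybridFrenetFrame I δ₁ δ₂ l m n ν₁ ν₂) (h' : IsHybridFrenetFrame I δ₁ δ₂ l m n ν₁' ν₂')
    {t₀ : ℝ} (ht : t ∈ I) (ht₀ : t₀ ∈ I) :
    (hybridFrame (ν₁' t) (ν₂' t))ᵀ * signMatrix δ₁ δ₂ * hybridFrame (ν₁ t) (ν₂ t) =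
      (hybridFrame (ν₁' t₀) (ν₂' t₀))ᵀ * signMatrix δ₁ δ₂ * hybridFrame (ν₁ t₀) (ν₂ t₀) := by
  ext i j
  refine hI.eq_of_forall_hasDerivAt_zero (f := fun s =>
    ((hybridFrame (ν₁' s) (ν₂' s))ᵀ * signMatrix δ₁ δ₂ * hybridFrame (ν₁ s) (ν₂ s)) i j)
    (fun s hs => ?_) ht ht₀
  exact hasDerivAt_transpose_mul_mul_eq_zero
    (frenetMatrix_transpose_mul_add_mul_eq_zero hδ₁ hδ₂ (l s) (m s) (n s))
    (h.hasDerivAt_frame hs) (h'.hasDerivAt_frame hs) i j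

theorem exists_motion (hI : Convex ℝ I) (hne : I.Nonempty) (hδ₁ : δ₁ ^ 2 = 1)
    (hδ₂ : δ₂ ^ 2 = 1) (h : IsHybridFrenetFrame I δ₁ δ₂ l m n ν₁ ν₂)
    (h' : IsHybridFrenetFrame I δ₁ δ₂ l m n ν₁' ν₂') :
    ∃ A : Matrix (Fin 3) (Fin 3) ℝ, Aᵀ * Gmat * A = Gmat ∧ A.det = 1 ∧
      ∀ t ∈ I, ∀ k, A *ᵥ hybridFrame (ν₁ t) (ν₂ t) k = hybridFrame (ν₁' t) (ν₂' t) k := by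
  obtain ⟨t₀, ht₀⟩ := hne
  have hD := signMatrix_mul_self hδ₁ hδ₂
  refine ⟨frameTransition Gmat (signMatrix δ₁ δ₂) (hybridFrame (ν₁ t₀) (ν₂ t₀))
    (hybridFrame (ν₁' t₀) (ν₂' t₀)), ?_, ?_, fun t ht => mulVec_eq_of_mul_transpose_eq ?_⟩
  · exact frameTransition_transpose_mul_mul Gmat_transpose (signMatrix_transpose δ₁ δ₂) hD
      (h.frame_mul_Gmat_mul_transpose ht₀) (h'.frame_mul_Gmat_mul_transpose ht₀)
  · simp only [frameTransition, det_mul, det_transpose, det_Gmat, det_signMatrix,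
      h.det_frame ht₀, h'.det_frame ht₀]
    linear_combination (δ₂ ^ 4 * (δ₁ ^ 2 + 1)) * hδ₁ + (δ₂ ^ 2 + 1) * hδ₂
  · rw [frameTransition, ← h.transpose_mul_mul_eq hI hδ₁ hδ₂ h' ht ht₀]
    exact frameTransition_mul_transpose hD (h.frame_mul_Gmat_mul_transpose ht)

end IsHybridFrenetFrame

/-- Uniqueness: two non-parabolic spatial hybrid framed curves on an interval
with the same curvature (l, m, n, α) and the same signs δ₁, δ₂ are congruent
through a spatial hybrid motion. -/
theorem stmt17 (I : Set ℝ) (hI : Convex ℝ I) (hne : I.Nonempty)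
    (l m n α : ℝ → ℝ) (δ₁ δ₂ : ℝ)
    (hδ₁ : δ₁ = 1 ∨ δ₁ = -1) (hδ₂ : δ₂ = 1 ∨ δ₂ = -1)
    (γ ν₁ ν₂ μ γt ν₁t ν₂t μt : ℝ → Fin 3 → ℝ)
    (hμ : ∀ t, μ t = hprod (ν₁ t) (ν₂ t))
    (hμt : ∀ t, μt t = hprod (ν₁t t) (ν₂t t))
    (hu₁ : ∀ t ∈ I, g (ν₁ t) (ν₁ t) = δ₁)
    (hu₂ : ∀ t ∈ I, g (ν₂ t) (ν₂ t) = δ₂)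
    (ho : ∀ t ∈ I, g (ν₁ t) (ν₂ t) = 0)
    (hut₁ : ∀ t ∈ I, g (ν₁t t) (ν₁t t) = δ₁)
    (hut₂ : ∀ t ∈ I, g (ν₂t t) (ν₂t t) = δ₂)
    (hot : ∀ t ∈ I, g (ν₁t t) (ν₂t t) = 0)
    (hode₁ : ∀ t ∈ I, HasDerivAt ν₁ (l t • ν₂ t + m t • μ t) t)
    (hode₂ : ∀ t ∈ I, HasDerivAt ν₂ ((-(δ₁ * δ₂) * l t) • ν₁ t + n t • μ t) t)
    (hodeγ : ∀ t ∈ I, HasDerivAt γ (α t • μ t) t)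
    (hodet₁ : ∀ t ∈ I, HasDerivAt ν₁t (l t • ν₂t t + m t • μt t) t)
    (hodet₂ : ∀ t ∈ I, HasDerivAt ν₂t ((-(δ₁ * δ₂) * l t) • ν₁t t + n t • μt t) t)
    (hodetγ : ∀ t ∈ I, HasDerivAt γt (α t • μt t) t) :
    ∃ A : Matrix (Fin 3) (Fin 3) ℝ, ∃ H₀ : Fin 3 → ℝ,
      Aᵀ * Gmat * A = Gmat ∧ A.det = 1 ∧
      ∀ t ∈ I, γt t = A.mulVec (γ t) + H₀ ∧
        ν₁t t = A.mulVec (ν₁ t) ∧ ν₂t t = A.mulVec (ν₂ t) := by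
  obtain ⟨t₀, ht₀⟩ := hne
  obtain rfl : μ = fun s => hprod (ν₁ s) (ν₂ s) := funext hμ
  obtain rfl : μt = fun s => hprod (ν₁t s) (ν₂t s) := funext hμt
  have hδ₁' : δ₁ ^ 2 = 1 := by rcases hδ₁ with rfl | rfl <;> norm_num
  have hδ₂' : δ₂ ^ 2 = 1 := by rcases hδ₂ with rfl | rfl <;> norm_num
  obtain ⟨A, hAG, hdet, hA⟩ := IsHybridFrenetFrame.exists_motion hI ⟨t₀, ht₀⟩ hδ₁' hδ₂'
    ⟨hu₁, hu₂, ho, hode₁, hode₂⟩ ⟨hut₁, hut₂, hot, hodet₁, hodet₂⟩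
  have hγ : ∀ s ∈ I, HasDerivAt (fun u => γt u - A *ᵥ γ u) 0 s := fun s hs =>
    ((hodetγ s hs).sub ((hodeγ s hs).const_mulVec A)).congr_deriv <| by
      rw [mulVec_smul, sub_eq_zero]
      exact congrArg (α s • ·) (hA s hs 2).symm
  refine ⟨A, γt t₀ - A *ᵥ γ t₀, hAG, hdet, fun t ht => ⟨?_, (hA t ht 0).symm, (hA t ht 1).symm⟩⟩
  rw [← hI.eq_of_forall_hasDerivAt_zero hγ ht ht₀]
  abel
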